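/- arXiv:1512.02720 — 2 statements merged into one kernel-verified Lean document; each statement's English description precedes it below -/
import Mathlib

section
/- Let R be a commutative ring with elements x, y, z, and let d_m be as defined via determinants of the matrices U_m. Then for every m ≥ 1 one has d_m = Σ_{j=0}^{⌊m/2⌋} C(m−j, j) · (−1)^{⌊(m−2j)/2⌋} · x^j y^j z^{m−2j}, where C(m−j, j) denotes a binomial coefficient. -/
/-!
Expanding `det U_{m+2}` along its first row, whose only nonzero entries are `x` and `z`, gives
`d_{m+2} = x y d_m + (-1)^{m+1} z d_{m+1}`. After the renormalisation `e_m = (-1)^⌊m/2⌋ d_m`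
this becomes the sign-free continuant recurrence `e_{m+2} = z e_{m+1} - x y e_m` with `e_0 = 1`,
`e_1 = z` (so `e_m` is the Dickson polynomial of the second kind `E_m(z, x y)`). By Pascal's rule,
`f_m = ∑_j C(m-j, j) bʲ u^{m-2j}` satisfies `f_{m+2} = u f_{m+1} + b f_m`, `f_0 = 1`, `f_1 = u`,
so `e_m` is `f_m` at `u = z`, `b = -x y`; multiplying back by `(-1)^⌊m/2⌋` distributes the sign
over the terms as `(-1)^⌊(m-2j)/2⌋`.
-/

/-- The `m × m` matrix `U_m` over a commutative ring `R` with distinguished elements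
`x, y, z`: its `(i,j)` entry (with 1-based indices) is `x` if `i + j = m`,
`z` if `i + j = m + 1`, `y` if `i + j = m + 2`, and `0` otherwise. -/
def Umat {R : Type*} [CommRing R] (x y z : R) (m : ℕ) : Matrix (Fin m) (Fin m) R :=
  Matrix.of fun i j =>
    if (i : ℕ) + (j : ℕ) + 2 = m then x
    else if (i : ℕ) + (j : ℕ) + 2 = m + 1 then z
    else if (i : ℕ) + (j : ℕ) + 2 = m + 2 then y
    else 0

/-- `d_m = det U_m`; in particular `d_0 = 1` (determinant of the empty matrix). -/
noncomputable def dSeq {R : Type*} [CommRing R] (x y z : R) (m : ℕ) : R :=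
  (Umat x y z m).det

open Finset

section Sign

variable {M : Type*} [Monoid M] [HasDistribNeg M]

lemma neg_one_pow_mul_self (n : ℕ) : (-1 : M) ^ n * (-1) ^ n = 1 := by
  rw [← pow_add, ← two_mul, pow_mul, neg_one_sq, one_pow]

lemma neg_one_pow_succ_div_two (n : ℕ) :
    (-1 : M) ^ ((n + 1) / 2) = (-1) ^ n * (-1) ^ (n / 2) := by
  rcases Nat.even_or_odd' n with ⟨k, rfl | rfl⟩
  · rw [show (2 * k + 1) / 2 = k by omega, show 2 * k / 2 = k by omega,
      (even_two_mul k).neg_one_pow, one_mul]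
  · rw [show (2 * k + 1 + 1) / 2 = k + 1 by omega, show (2 * k + 1) / 2 = k by omega,
      (odd_two_mul_add_one k).neg_one_pow, pow_succ', neg_one_mul]

lemma neg_one_pow_mul_neg_pow {k j : ℕ} (h : j ≤ k) (a : M) :
    (-1) ^ k * (-a) ^ j = (-1) ^ (k - j) * a ^ j := by
  obtain ⟨i, rfl⟩ := Nat.exists_eq_add_of_le' h
  rw [neg_pow a, pow_add, Nat.add_sub_cancel, mul_assoc, ← mul_assoc ((-1) ^ j),
    neg_one_pow_mul_self, one_mul]

end Sign

section FibSum

variable {S : Type*} [CommSemiring S] (b u : S)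

def fibTerm (n j : ℕ) : S :=
  ((n - j).choose j : S) * b ^ j * u ^ (n - 2 * j)

def fibSum (n : ℕ) : S :=
  ∑ j ∈ range (n / 2 + 1), fibTerm b u n j

lemma fibTerm_eq_zero {n j : ℕ} (h : n < 2 * j) : fibTerm b u n j = 0 := by
  rw [fibTerm, Nat.choose_eq_zero_of_lt (by omega), Nat.cast_zero, zero_mul, zero_mul]

lemma fibTerm_add_two_succ (n j : ℕ) :
    fibTerm b u (n + 2) (j + 1) = u * fibTerm b u (n + 1) (j + 1) + b * fibTerm b u n j := by
  rcases lt_trichotomy n (2 * j) with h | rfl | h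
  · rw [fibTerm_eq_zero b u h, fibTerm_eq_zero b u (n := n + 1) (by omega),
      fibTerm_eq_zero b u (n := n + 2) (by omega), mul_zero, mul_zero, add_zero]
  · rw [fibTerm_eq_zero b u (n := 2 * j + 1) (by omega), fibTerm, fibTerm]
    simp only [show 2 * j + 2 - (j + 1) = j + 1 by omega, show 2 * j - j = j by omega,
      show 2 * j + 2 - 2 * (j + 1) = 0 by omega, Nat.sub_self, Nat.choose_self, Nat.cast_one,
      pow_zero, mul_zero, zero_add, mul_one, one_mul]
    ring
  · obtain ⟨k, rfl⟩ : ∃ k, n = 2 * j + 1 + k := ⟨n - (2 * j + 1), by omega⟩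
    simp only [fibTerm, show 2 * j + 1 + k + 2 - (j + 1) = j + k + 1 + 1 by omega,
      show 2 * j + 1 + k + 1 - (j + 1) = j + k + 1 by omega,
      show 2 * j + 1 + k - j = j + k + 1 by omega,
      show 2 * j + 1 + k + 2 - 2 * (j + 1) = k + 1 by omega,
      show 2 * j + 1 + k + 1 - 2 * (j + 1) = k by omega,
      show 2 * j + 1 + k - 2 * j = k + 1 by omega, Nat.choose_succ_succ', Nat.cast_add]
    ring

lemma sum_range_fibTerm_of_le {n K : ℕ} (h : n / 2 + 1 ≤ K) :
    ∑ j ∈ range K, fibTerm b u n j = fibSum b u n :=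
  (sum_subset (range_subset_range.2 h) fun _ _ hj ↦
    fibTerm_eq_zero b u (by simp at hj; omega)).symm

lemma fibSum_add_two (n : ℕ) :
    fibSum b u (n + 2) = u * fibSum b u (n + 1) + b * fibSum b u n := by
  have hu : fibTerm b u (n + 2) 0 = u * fibTerm b u (n + 1) 0 := by simp [fibTerm, pow_succ']
  calc fibSum b u (n + 2)
      = ∑ j ∈ range (n / 2 + 1), fibTerm b u (n + 2) (j + 1) + fibTerm b u (n + 2) 0 := by
        rw [fibSum, show (n + 2) / 2 + 1 = n / 2 + 1 + 1 by omega, sum_range_succ']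
    _ = u * (∑ j ∈ range (n / 2 + 1), fibTerm b u (n + 1) (j + 1) + fibTerm b u (n + 1) 0)
          + b * fibSum b u n := by
        simp only [fibTerm_add_two_succ, sum_add_distrib, mul_add, mul_sum, fibSum, hu]
        exact add_right_comm _ _ _
    _ = u * fibSum b u (n + 1) + b * fibSum b u n := by
        rw [← sum_range_succ', sum_range_fibTerm_of_le b u (by omega)]

lemma eq_fibSum_of_add_two {f : ℕ → S} (h₀ : f 0 = 1) (h₁ : f 1 = u)
    (h : ∀ n, f (n + 2) = u * f (n + 1) + b * f n) (n : ℕ) : f n = fibSum b u n := by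
  induction n using Nat.twoStepInduction with
  | zero => simp [h₀, fibSum, fibTerm]
  | one => simp [h₁, fibSum, fibTerm]
  | more n ih₀ ih₁ => rw [h, ih₀, ih₁, fibSum_add_two]

end FibSum

lemma Matrix.det_succ_column_of_single {R : Type*} [CommRing R] {n : ℕ}
    (A : Matrix (Fin (n + 1)) (Fin (n + 1)) R) (i j : Fin (n + 1)) (h : ∀ k ≠ i, A k j = 0) :
    A.det = (-1) ^ (i + j : ℕ) * A i j * (A.submatrix i.succAbove j.succAbove).det := by
  rw [Matrix.det_succ_column A j, sum_eq_single i (fun k _ hk ↦ by rw [h k hk]; ring) (by simp)]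

section Umat

variable {R : Type*} [CommRing R] (x y z : R)

lemma Umat_apply_of_add_eq_x {m : ℕ} {i j : Fin m} (h : (i : ℕ) + j + 2 = m) :
    Umat x y z m i j = x := by
  rw [Umat, Matrix.of_apply, if_pos h]

lemma Umat_apply_of_add_eq_z {m : ℕ} {i j : Fin m} (h : (i : ℕ) + j + 1 = m) :
    Umat x y z m i j = z := by
  rw [Umat, Matrix.of_apply, if_neg (by omega), if_pos (by omega)]

lemma Umat_apply_of_add_eq_y {m : ℕ} {i j : Fin m} (h : (i : ℕ) + j = m) :
    Umat x y z m i j = y := by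
  rw [Umat, Matrix.of_apply, if_neg (by omega), if_neg (by omega), if_pos (by omega)]

lemma Umat_apply_eq_zero {m : ℕ} {i j : Fin m} (h : (i : ℕ) + j + 2 < m ∨ m < i + j) :
    Umat x y z m i j = 0 := by
  rw [Umat, Matrix.of_apply, if_neg (by omega), if_neg (by omega), if_neg (by omega)]

/-- Entries of `U_n` depend only on `i + j`, so a minor whose row and column indices are shifted
by a total of `n - m` is `U_m`. -/
lemma Umat_submatrix {m n : ℕ} (r c : Fin m → Fin n)
    (h : ∀ i j, (r i : ℕ) + c j + m = i + j + n) :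
    (Umat x y z n).submatrix r c = Umat x y z m := by
  ext i j
  have := h i j
  simp only [Matrix.submatrix_apply, Umat, Matrix.of_apply]
  split_ifs <;> first | rfl | omega

lemma dSeq_add_two (m : ℕ) :
    dSeq x y z (m + 2) = x * y * dSeq x y z m + (-1) ^ (m + 1) * z * dSeq x y z (m + 1) := by
  have hz : ((Umat x y z (m + 2)).submatrix Fin.succ (Fin.last (m + 1)).succAbove).det =
      dSeq x y z (m + 1) := by
    rw [Fin.succAbove_last, Umat_submatrix x y z _ _ (fun i j ↦ by simp; omega), dSeq]
  have hx : ((Umat x y z (m + 2)).submatrix Fin.succ (Fin.last m).castSucc.succAbove).det =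
      (-1) ^ m * y * dSeq x y z m := by
    rw [Matrix.det_succ_column_of_single _ 0 (Fin.last m), Matrix.submatrix_submatrix,
      Matrix.submatrix_apply, Umat_submatrix x y z _ _ (fun i j ↦ by simp; omega),
      Fin.succAbove_castSucc_self, Umat_apply_of_add_eq_y x y z (by simp; omega), dSeq]
    · simp
    · intro k hk
      have : (k : ℕ) ≠ 0 := fun h ↦ hk (Fin.ext h)
      exact Umat_apply_eq_zero x y z (Or.inr (by simp; omega))
  rw [dSeq, Matrix.det_succ_row_zero, sum_eq_add_of_mem (Fin.last m).castSucc (Fin.last (m + 1))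
    (mem_univ _) (mem_univ _) (by simp [Fin.ext_iff]) (fun k _ hk ↦ ?_), hx, hz,
    Umat_apply_of_add_eq_x x y z (by simp), Umat_apply_of_add_eq_z x y z (by simp)]
  · simp only [Fin.val_castSucc, Fin.val_last]
    linear_combination x * y * dSeq x y z m * neg_one_pow_mul_self (M := R) m
  · simp only [ne_eq, Fin.ext_iff, Fin.val_castSucc, Fin.val_last] at hk
    rw [Umat_apply_eq_zero x y z (Or.inl (by simp; omega)), mul_zero, zero_mul]

lemma neg_one_pow_div_two_mul_dSeq (m : ℕ) :
    (-1) ^ (m / 2) * dSeq x y z m = fibSum (-(x * y)) z m := by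
  refine eq_fibSum_of_add_two _ _ (f := fun n ↦ (-1) ^ (n / 2) * dSeq x y z n) ?_ ?_
    (fun n ↦ ?_) m
  · simp [dSeq]
  · simp [dSeq, Umat]
  · rw [dSeq_add_two, show (n + 2) / 2 = n / 2 + 1 by omega, neg_one_pow_succ_div_two, pow_succ,
      pow_succ]
    ring

end Umat

theorem dSeq_closed_formula_general {R : Type*} [CommRing R] (x y z : R) (m : ℕ) :
    dSeq x y z m =
      ∑ j ∈ Finset.range (m / 2 + 1),
        ((m - j).choose j : R) * (-1 : R) ^ ((m - 2 * j) / 2) *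
          x ^ j * y ^ j * z ^ (m - 2 * j) := by
  calc dSeq x y z m = (-1) ^ (m / 2) * ((-1) ^ (m / 2) * dSeq x y z m) := by
        rw [← mul_assoc, neg_one_pow_mul_self, one_mul]
    _ = _ := by
      rw [neg_one_pow_div_two_mul_dSeq, fibSum, mul_sum]
      refine sum_congr rfl fun j hj ↦ ?_
      have hsign := neg_one_pow_mul_neg_pow (Nat.lt_succ_iff.mp (mem_range.mp hj)) (x * y)
      rw [show m / 2 - j = (m - 2 * j) / 2 by omega] at hsign
      rw [fibTerm]
      linear_combination ((m - j).choose j : R) * z ^ (m - 2 * j) * hsign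

/-- For every `m ≥ 1` one has
`d_m = ∑_{j=0}^{⌊m/2⌋} C(m-j, j) (-1)^{⌊(m-2j)/2⌋} x^j y^j z^{m-2j}`. -/
theorem dSeq_closed_formula {R : Type*} [CommRing R] (x y z : R) (m : ℕ) (hm : 1 ≤ m) :
    dSeq x y z m =
      ∑ j ∈ Finset.range (m / 2 + 1),
        ((m - j).choose j : R) * (-1 : R) ^ ((m - 2 * j) / 2) *
          x ^ j * y ^ j * z ^ (m - 2 * j) :=
  dSeq_closed_formula_general x y z m
end

section
/- Let (Q, 𝔫) be a regular local ring of Krull dimension 3 with residue field k, and let 𝔤 ⊆ 𝔫² be an 𝔫-primary ideal minimally generated by elements g_0, …, g_{2m} such that Q/𝔤 has one-dimensional socle (i.e., Q/𝔤 is an artinian Gorenstein local ring). Then the ideal 𝔞 = 𝔫·g_0 + (g_1, …, g_{2m}) is 𝔫-primary and Q/𝔞 has type 2, i.e., dim_k Soc(Q/𝔞) = 2; in particular Q/𝔞 is not Gorenstein. -/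
/-- A commutative Noetherian local ring is *regular* if its maximal ideal can be
generated by `n` elements, where `n` is the Krull dimension of the ring. -/
def IsRegularLocal (Q : Type*) [CommRing Q] [IsLocalRing Q] : Prop :=
  IsNoetherianRing Q ∧ ∃ (n : ℕ) (f : Fin n → Q),
    Ideal.span (Set.range f) = IsLocalRing.maximalIdeal Q ∧ ringKrullDim Q = n

/-- The socle of the quotient ring `Q ⧸ 𝔞` of a local ring `(Q, 𝔫)` (with `𝔞 ≤ 𝔫`),
namely the annihilator `(0 : 𝔪)` of the maximal ideal `𝔪 = 𝔫(Q ⧸ 𝔞)` of `Q ⧸ 𝔞`. -/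
noncomputable def quotSocle {Q : Type*} [CommRing Q] (𝔫 𝔞 : Ideal Q) :
    Ideal (Q ⧸ 𝔞) :=
  Submodule.annihilator (𝔫.map (Ideal.Quotient.mk 𝔞))

/-!
Write `𝔤 = 𝔞 + (g₀)`. Minimality of the generators gives `g₀ ∉ 𝔞`, and `𝔫 g₀ ⊆ 𝔞`, so
`𝔤 ⊆ 𝔞 : 𝔫 ⊆ 𝔤 : 𝔫 = 𝔤 + (w)` with `w` a lift of the socle generator of `Q ⧸ 𝔤`. As `𝔫 w ⊆ 𝔤`,
the colon `𝔞 : 𝔫` is either `𝔤 + (w)` or `𝔤`. In the first case the images of `g₀` and `w` form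
a basis of the socle of `Q ⧸ 𝔞`. In the second case both `Q ⧸ 𝔞` (with socle `(g₀)`) and
`Q ⧸ 𝔤` have principal socle. Duality `ann (ann I) = I` in the artinian Gorenstein ring `Q ⧸ 𝔞`
then turns `ann 𝔪² = (g₀, w) = (w)` into `ann w = 𝔪²`, so `𝔪 / 𝔪² ≅ 𝔪 w ⊆ (g₀)` has dimension at
most one. Since `𝔞 ⊆ 𝔫²` the same holds for `𝔫`, which is then principal and `dim Q ≤ 1`.
-/

open Ideal IsLocalRing

theorem Ideal.le_annihilator_annihilator {A : Type*} [CommRing A] (I : Ideal A) :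
    I ≤ I.annihilator.annihilator :=
  fun x hx => Submodule.mem_annihilator.2 fun y hy => by
    rw [smul_eq_mul, mul_comm]
    exact Submodule.mem_annihilator.1 hy x hx

namespace IsLocalRing

variable {A : Type*} [CommRing A] [IsLocalRing A] {s : A}

theorem isUnit_of_mul_ne_zero (hs : s ∈ (maximalIdeal A).annihilator) {c : A}
    (hc : c * s ≠ 0) : IsUnit c := by
  by_contra h
  rw [mul_comm] at hc
  exact hc (Submodule.mem_annihilator.1 hs c ((mem_maximalIdeal c).2 h))

theorem exists_maximalIdeal_le_span_sup_sq_of_annihilator_le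
    (hs : s ∈ (maximalIdeal A).annihilator) {u : A}
    (hu : u ∈ (span {s}).colon (maximalIdeal A))
    (hann : (span {u}).annihilator ≤ maximalIdeal A ^ 2) :
    ∃ ν ∈ maximalIdeal A, maximalIdeal A ≤ span {ν} ⊔ maximalIdeal A ^ 2 := by
  by_cases h : ∀ ν ∈ maximalIdeal A, ν * u = 0
  · exact ⟨0, zero_mem _, fun q hq =>
      mem_sup_right (hann ((Submodule.mem_annihilator_span_singleton _ _).2 (h q hq)))⟩
  push Not at h
  obtain ⟨ν, hν, hνu⟩ := h
  obtain ⟨c, hc⟩ := mem_span_singleton'.1 (Submodule.mem_colon.1 hu ν hν)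
  obtain ⟨c, rfl⟩ := isUnit_of_mul_ne_zero hs (by rw [hc, smul_eq_mul, mul_comm]; exact hνu)
  refine ⟨ν, hν, fun q hq => ?_⟩
  obtain ⟨a, ha⟩ := mem_span_singleton'.1 (Submodule.mem_colon.1 hu q hq)
  have hq2 : q - a * ↑c⁻¹ * ν ∈ maximalIdeal A ^ 2 := by
    refine hann ((Submodule.mem_annihilator_span_singleton _ _).2 ?_)
    rw [smul_eq_mul] at ha hc ⊢
    linear_combination (-1 : A) * ha + a * ↑c⁻¹ * hc + (-a * s) * c.inv_mul
  simpa using add_mem (mem_sup_right hq2)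
    (mem_sup_left (mul_mem_left _ (a * ↑c⁻¹) (mem_span_singleton_self ν)))

variable (hs : (maximalIdeal A).annihilator = span {s})
include hs

theorem mul_mem_span_of_mem_annihilator {I : Ideal A} {b x : A}
    (hb : b ∈ I.colon (maximalIdeal A)) (hx : x ∈ I.annihilator) : x * b ∈ span {s} :=
  hs ▸ Submodule.mem_annihilator.2 fun n hn => by
    rw [smul_eq_mul, mul_assoc]
    exact Submodule.mem_annihilator.1 hx _ (Submodule.mem_colon.1 hb n hn)

theorem exists_mem_annihilator_mul_eq {I : Ideal A} (hI : I.annihilator.annihilator = I) {b : A}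
    (hb : b ∈ I.colon (maximalIdeal A)) (hbI : b ∉ I) : ∃ x₀ ∈ I.annihilator, x₀ * b = s := by
  obtain ⟨x, hx, hxb⟩ : ∃ x ∈ I.annihilator, x * b ≠ 0 := by
    by_contra! h
    exact hbI (hI ▸ Submodule.mem_annihilator.2 fun x hx => by
      rw [smul_eq_mul, mul_comm]; exact h x hx)
  obtain ⟨c, hc⟩ := mem_span_singleton'.1 (mul_mem_span_of_mem_annihilator hs hb hx)
  obtain ⟨u, rfl⟩ := isUnit_of_mul_ne_zero (hs ▸ mem_span_singleton_self s) (hc ▸ hxb)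
  exact ⟨↑u⁻¹ * x, mul_mem_left _ _ hx, by rw [mul_assoc, ← hc, Units.inv_mul_cancel_left]⟩

theorem annihilator_annihilator_sup_span_singleton {I : Ideal A}
    (hI : I.annihilator.annihilator = I) {b : A} (hb : b ∈ I.colon (maximalIdeal A)) :
    (I ⊔ span {b}).annihilator.annihilator = I ⊔ span {b} := by
  by_cases hbI : b ∈ I
  · rwa [sup_eq_left.2 ((span_singleton_le_iff_mem _).2 hbI)]
  have hs_soc : s ∈ (maximalIdeal A).annihilator := hs ▸ mem_span_singleton_self s
  have mem_ann_sup : ∀ x, x ∈ (I ⊔ span {b}).annihilator ↔ x ∈ I.annihilator ∧ x * b = 0 := by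
    simp [Submodule.annihilator_sup]
  obtain ⟨x₀, hx₀, hx₀b⟩ := exists_mem_annihilator_mul_eq hs hI hb hbI
  refine le_antisymm (fun y hy => ?_) (le_annihilator_annihilator _)
  -- `y x₀` lies in the socle, since `𝔪 x₀` annihilates `I + (b)`.
  obtain ⟨c₀, hc₀⟩ : ∃ c₀, c₀ * s = y * x₀ := mem_span_singleton'.1 <| hs ▸
    Submodule.mem_annihilator.2 fun n hn => by
      have : n * x₀ ∈ (I ⊔ span {b}).annihilator := (mem_ann_sup _).2 ⟨mul_mem_left _ _ hx₀, by
        rw [mul_assoc, hx₀b, mul_comm]; exact Submodule.mem_annihilator.1 hs_soc n hn⟩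
      rw [smul_eq_mul, mul_assoc, mul_comm x₀]
      exact Submodule.mem_annihilator.1 hy _ this
  have hyI : y - c₀ * b ∈ I := hI ▸ Submodule.mem_annihilator.2 fun x hx => by
    obtain ⟨c, hc⟩ := mem_span_singleton'.1 (mul_mem_span_of_mem_annihilator hs hb hx)
    have hx' : x - c * x₀ ∈ (I ⊔ span {b}).annihilator := (mem_ann_sup _).2
      ⟨sub_mem hx (mul_mem_left _ _ hx₀), by rw [sub_mul, mul_assoc, hx₀b, hc, sub_self]⟩
    have h0 : y * (x - c * x₀) = 0 := Submodule.mem_annihilator.1 hy _ hx'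
    rw [smul_eq_mul]
    linear_combination h0 - c * hc₀ + c₀ * hc
  simpa using add_mem (mem_sup_left hyI)
    (mem_sup_right (mul_mem_left _ c₀ (mem_span_singleton_self b)))

variable [IsArtinianRing A]

theorem annihilator_annihilator_eq (I : Ideal A) : I.annihilator.annihilator = I := by
  induction I using WellFoundedLT.induction with
  | _ I ih =>
  rcases eq_or_ne I ⊥ with rfl | hI
  · rw [Submodule.annihilator_bot, Submodule.annihilator_top,
      Module.annihilator_eq_bot.2 inferInstance]
  obtain ⟨J, -, hJI⟩ := exists_le_covBy_of_lt (bot_lt_iff_ne_bot.2 hI)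
  -- Nakayama: `J + 𝔪 I` is `J` or `I`, and it cannot be `I`.
  have h𝔪I : maximalIdeal A • I ≤ J := by
    refine sup_eq_left.1 ((hJI.eq_or_eq le_sup_left (sup_le hJI.le Submodule.smul_le_right))
      |>.resolve_right fun h => hJI.lt.not_ge ?_)
    exact Submodule.le_of_le_smul_of_le_jacobson_bot (IsNoetherian.noetherian I)
      (maximalIdeal_le_jacobson ⊥) h.ge
  obtain ⟨b, hbI, hbJ⟩ := SetLike.exists_of_lt hJI.lt
  have hJb : J ⊔ span {b} = I :=
    (hJI.eq_or_eq le_sup_left (sup_le hJI.le ((span_singleton_le_iff_mem _).2 hbI))).resolve_left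
      fun h => hbJ (h ▸ mem_sup_right (mem_span_singleton_self b))
  rw [← hJb]
  refine annihilator_annihilator_sup_span_singleton hs (ih J hJI.lt)
    (Submodule.mem_colon.2 fun n hn => ?_)
  rw [smul_eq_mul, mul_comm]
  exact h𝔪I (Submodule.smul_mem_smul hn hbI)

theorem annihilator_le_comm {I J : Ideal A} : I.annihilator ≤ J ↔ J.annihilator ≤ I := by
  constructor <;> intro h
  · exact annihilator_annihilator_eq hs I ▸ Submodule.annihilator_mono h
  · exact annihilator_annihilator_eq hs J ▸ Submodule.annihilator_mono h

theorem mem_of_ne_bot {I : Ideal A} (hI : I ≠ ⊥) : s ∈ I :=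
  (annihilator_le_comm hs).1 (le_maximalIdeal (mt Submodule.annihilator_eq_top_iff.1 hI))
    (hs ▸ mem_span_singleton_self s)

theorem exists_maximalIdeal_le_span_sup_sq {t : A}
    (ht : (span {s}).colon (maximalIdeal A) = span {s} ⊔ span {t}) :
    ∃ ν ∈ maximalIdeal A, maximalIdeal A ≤ span {ν} ⊔ maximalIdeal A ^ 2 := by
  have hs_soc : s ∈ (maximalIdeal A).annihilator := hs ▸ mem_span_singleton_self s
  have hsq : (maximalIdeal A ^ 2).annihilator ≤ span {s} ⊔ span {t} := fun z hz =>
    ht ▸ Submodule.mem_colon.2 fun n hn => hs ▸ Submodule.mem_annihilator.2 fun m hm => by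
      rw [smul_eq_mul, smul_eq_mul, mul_assoc]
      exact Submodule.mem_annihilator.1 hz _ (pow_two (maximalIdeal A) ▸ mul_mem_mul hn hm)
  obtain ⟨u, hu, hsq_u⟩ : ∃ u ∈ (span {s}).colon (maximalIdeal A),
      (maximalIdeal A ^ 2).annihilator ≤ span {u} := by
    rcases eq_or_ne t 0 with rfl | ht0
    · exact ⟨s, ht ▸ mem_sup_left (mem_span_singleton_self s), by simpa using hsq⟩
    · exact ⟨t, ht ▸ mem_sup_right (mem_span_singleton_self t), hsq.trans (sup_le
        ((span_singleton_le_iff_mem _).2 (mem_of_ne_bot hs (by simpa using ht0))) le_rfl)⟩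
  exact exists_maximalIdeal_le_span_sup_sq_of_annihilator_le hs_soc hu
    ((annihilator_le_comm hs).1 hsq_u)

end IsLocalRing

section Colon

variable {R : Type*} [CommRing R]

theorem Ideal.map_mk_colon {𝔞 J : Ideal R} (h : 𝔞 ≤ J) (I : Ideal R) :
    (J.colon I).map (Ideal.Quotient.mk 𝔞) =
      (J.map (Ideal.Quotient.mk 𝔞)).colon (I.map (Ideal.Quotient.mk 𝔞)) := by
  ext y
  obtain ⟨r, rfl⟩ := Ideal.Quotient.mk_surjective y
  rw [mem_quotient_iff_mem (h.trans le_colon), Submodule.mem_colon, Submodule.mem_colon]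
  constructor
  · intro hr p hp
    obtain ⟨i, hi, rfl⟩ := (mem_map_iff_of_surjective _ Ideal.Quotient.mk_surjective).1 hp
    exact mem_map_of_mem _ (hr i hi)
  · intro hr i hi
    exact (mem_quotient_iff_mem h).1 (hr _ (mem_map_of_mem _ hi))

theorem Ideal.map_mk_sup_span (𝔞 : Ideal R) (s : Set R) :
    (𝔞 ⊔ span s).map (Ideal.Quotient.mk 𝔞) = span (Ideal.Quotient.mk 𝔞 '' s) := by
  rw [Ideal.map_sup, map_quotient_self, bot_sup_eq, map_span]

theorem Ideal.map_mk_sup_span_singleton (𝔞 : Ideal R) (x : R) :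
    (𝔞 ⊔ span {x}).map (Ideal.Quotient.mk 𝔞) = span {Ideal.Quotient.mk 𝔞 x} := by
  rw [map_mk_sup_span, Set.image_singleton]

theorem Ideal.radical_eq_of_mul_le_of_le {𝔫 𝔞 𝔤 : Ideal R} (h𝔤 : 𝔤.radical = 𝔫)
    (h₁ : 𝔫 * 𝔤 ≤ 𝔞) (h₂ : 𝔞 ≤ 𝔤) : 𝔞.radical = 𝔫 := by
  refine le_antisymm (h𝔤 ▸ radical_mono h₂) ?_
  calc 𝔫 = (𝔫 * 𝔤).radical := by rw [radical_mul, ← h𝔤, radical_idem, inf_idem]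
    _ ≤ 𝔞.radical := radical_mono h₁

theorem quotSocle_eq_map_colon (𝔫 𝔞 : Ideal R) :
    quotSocle 𝔫 𝔞 = (𝔞.colon 𝔫).map (Ideal.Quotient.mk 𝔞) := by
  rw [quotSocle, ← Submodule.bot_colon, ← map_quotient_self 𝔞, map_mk_colon le_rfl]

theorem mk_mem_quotSocle_iff {𝔫 𝔞 : Ideal R} {x : R} :
    Ideal.Quotient.mk 𝔞 x ∈ quotSocle 𝔫 𝔞 ↔ x ∈ 𝔞.colon 𝔫 := by
  rw [quotSocle_eq_map_colon, mem_quotient_iff_mem le_colon]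

theorem quotSocle_eq_span_range {ι : Type*} {𝔫 𝔞 : Ideal R} {v : ι → R}
    (h : 𝔞.colon 𝔫 = 𝔞 ⊔ span (Set.range v)) :
    quotSocle 𝔫 𝔞 = span (Set.range fun i => Ideal.Quotient.mk 𝔞 (v i)) := by
  rw [quotSocle_eq_map_colon, h, map_mk_sup_span, ← Set.range_comp]
  rfl

theorem colon_eq_sup_of_quotSocle_eq {𝔫 𝔤 : Ideal R} {x : R}
    (h : quotSocle 𝔫 𝔤 = span {Ideal.Quotient.mk 𝔤 x}) : 𝔤.colon 𝔫 = 𝔤 ⊔ span {x} := by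
  ext y
  rw [← mk_mem_quotSocle_iff, h, ← map_mk_sup_span_singleton, mem_quotient_iff_mem le_sup_left]

theorem not_exists_quotSocle_eq_span_singleton {𝔫 𝔞 : Ideal R} (h𝔫 : (1 : R) ∉ 𝔫)
    {v : Fin 2 → R} (hv : ∀ c : Fin 2 → R, ∑ i, c i * v i ∈ 𝔞 → ∀ i, c i ∈ 𝔫)
    (hsoc : quotSocle 𝔫 𝔞 = span (Set.range fun i => Ideal.Quotient.mk 𝔞 (v i))) :
    ¬ ∃ w, quotSocle 𝔫 𝔞 = span {w} := by
  rintro ⟨w, hw⟩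
  obtain ⟨t, rfl⟩ := Ideal.Quotient.mk_surjective w
  have ht : t ∈ 𝔞.colon 𝔫 := mk_mem_quotSocle_iff.1 (hw ▸ mem_span_singleton_self _)
  have hmul : ∀ i, ∃ q, v i - q * t ∈ 𝔞 := fun i => by
    have hvi : Ideal.Quotient.mk 𝔞 (v i) ∈ quotSocle 𝔫 𝔞 := hsoc ▸ subset_span ⟨i, rfl⟩
    obtain ⟨a, ha⟩ := mem_span_singleton'.1 (hw ▸ hvi)
    obtain ⟨q, rfl⟩ := Ideal.Quotient.mk_surjective a
    exact ⟨q, Ideal.Quotient.eq.1 ((map_mul _ q t).trans ha).symm⟩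
  obtain ⟨q, hq⟩ := hmul 0
  obtain ⟨r, hr⟩ := hmul 1
  have hq𝔫 : q ∈ 𝔫 := by
    refine hv ![-r, q] ?_ 1
    have := add_mem (mul_mem_left _ (-r) hq) (mul_mem_left _ q hr)
    simp only [Fin.sum_univ_two, Matrix.cons_val_zero, Matrix.cons_val_one]
    convert this using 1
    ring
  have hv0 : v 0 ∈ 𝔞 := by
    simpa [mul_comm] using add_mem hq (Submodule.mem_colon.1 ht q hq𝔫)
  exact h𝔫 (hv ![1, 0] (by simpa [Fin.sum_univ_two] using hv0) 0)

end Colon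

namespace IsLocalRing

variable {R : Type*} [CommRing R] [IsLocalRing R]

theorem mem_maximalIdeal_of_mul_mem {J : Ideal R} {c x : R} (h : c * x ∈ J) (hx : x ∉ J) :
    c ∈ maximalIdeal R := by
  by_contra hc
  exact hx ((unit_mul_mem_iff_mem _ (notMem_maximalIdeal.1 hc)).1 h)

theorem wcovBy_sup_span_singleton {J : Ideal R} {w : R} (hw : w ∈ J.colon (maximalIdeal R)) :
    J ⩿ J ⊔ span {w} := by
  refine ⟨le_sup_left, fun I hJI hI => ?_⟩
  obtain ⟨x, hxI, hxJ⟩ := SetLike.exists_of_lt hJI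
  obtain ⟨j, hj, _, hc, rfl⟩ := Submodule.mem_sup.1 (hI.le hxI)
  obtain ⟨c, rfl⟩ := mem_span_singleton'.1 hc
  have hc𝔪 : c ∉ maximalIdeal R := fun h =>
    hxJ (add_mem hj (by rw [mul_comm]; exact Submodule.mem_colon.1 hw c h))
  have hcw : c * w ∈ I := by simpa using sub_mem hxI (hJI.le hj)
  exact hI.not_ge (sup_le hJI.le ((span_singleton_le_iff_mem _).2
    ((unit_mul_mem_iff_mem _ (notMem_maximalIdeal.1 hc𝔪)).1 hcw)))

theorem forall_mem_maximalIdeal_of_sum_mem {𝔞 : Ideal R} {x y : R} (hx : x ∉ 𝔞)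
    (hy : y ∉ 𝔞 ⊔ span {x}) (hy𝔪 : y ∈ 𝔞.colon (maximalIdeal R)) :
    ∀ c : Fin 2 → R, ∑ i, c i * ![x, y] i ∈ 𝔞 → ∀ i, c i ∈ maximalIdeal R := by
  intro c hc
  simp only [Fin.sum_univ_two, Matrix.cons_val_zero, Matrix.cons_val_one] at hc
  have h1 : c 1 ∈ maximalIdeal R := mem_maximalIdeal_of_mul_mem (by
    simpa using sub_mem (mem_sup_left hc) (mem_sup_right (mul_mem_left _ (c 0)
      (mem_span_singleton_self x)))) hy
  have h0 : c 0 ∈ maximalIdeal R := mem_maximalIdeal_of_mul_mem (by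
    simpa [mul_comm] using sub_mem hc (Submodule.mem_colon.1 hy𝔪 _ h1)) hx
  intro i
  fin_cases i
  exacts [h0, h1]

variable [IsNoetherianRing R]

theorem ringKrullDim_le_one_of_maximalIdeal_le_span_sup_sq {τ : R} (hτ : τ ∈ maximalIdeal R)
    (h : maximalIdeal R ≤ span {τ} ⊔ maximalIdeal R ^ 2) : ringKrullDim R ≤ 1 := by
  have h𝔪 : maximalIdeal R = span {τ} :=
    le_antisymm (Submodule.le_of_le_smul_of_le_jacobson_bot (IsNoetherian.noetherian _)
      (maximalIdeal_le_jacobson ⊥) (by rwa [smul_eq_mul, ← pow_two]))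
      ((span_singleton_le_iff_mem _).2 hτ)
  calc ringKrullDim R ≤ (maximalIdeal R).spanFinrank := ringKrullDim_le_spanFinrank_maximalIdeal R
    _ ≤ 1 := by
      rw [h𝔪]
      exact_mod_cast (Submodule.spanFinrank_span_le_ncard_of_finite
        (Set.finite_singleton τ)).trans (by simp)

theorem ringKrullDim_le_one_of_colon_eq {𝔞 : Ideal R} (h𝔞 : 𝔞 ≤ maximalIdeal R ^ 2)
    (hrad : 𝔞.radical = maximalIdeal R) {x y : R}
    (hx : 𝔞.colon (maximalIdeal R) = 𝔞 ⊔ span {x})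
    (hy : (𝔞 ⊔ span {x}).colon (maximalIdeal R) = 𝔞 ⊔ span {x} ⊔ span {y}) :
    ringKrullDim R ≤ 1 := by
  have : Nontrivial (R ⧸ 𝔞) := Quotient.nontrivial_iff.2 fun h =>
    one_notMem (maximalIdeal R) (h𝔞.trans (pow_le_self two_ne_zero) (h ▸ Submodule.mem_top))
  have : IsLocalRing (R ⧸ 𝔞) := .of_surjective' _ Ideal.Quotient.mk_surjective
  have : IsArtinianRing (R ⧸ 𝔞) := quotient_artinian_of_mem_minimalPrimes_of_isLocalRing 𝔞
    (by rw [← radical_minimalPrimes, hrad, minimalPrimes_eq_subsingleton_self]; rfl)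
  have h𝔪 := map_maximalIdeal_of_surjective (Ideal.Quotient.mk 𝔞) Ideal.Quotient.mk_surjective
  obtain ⟨ν, hν, hle⟩ := exists_maximalIdeal_le_span_sup_sq (s := Ideal.Quotient.mk 𝔞 x)
    (by rw [← h𝔪, ← Submodule.bot_colon, ← map_quotient_self 𝔞, ← map_mk_colon le_rfl, hx,
      map_mk_sup_span_singleton])
    (t := Ideal.Quotient.mk 𝔞 y)
    (by rw [← h𝔪, ← map_mk_sup_span_singleton, ← map_mk_colon le_sup_left, hy, Ideal.map_sup,
      map_mk_sup_span_singleton, map_span, Set.image_singleton])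
  obtain ⟨τ, hτ, rfl⟩ := (mem_map_iff_of_surjective _ Ideal.Quotient.mk_surjective).1 (h𝔪 ▸ hν)
  refine ringKrullDim_le_one_of_maximalIdeal_le_span_sup_sq hτ ?_
  calc maximalIdeal R
      ≤ ((maximalIdeal R).map (Ideal.Quotient.mk 𝔞)).comap (Ideal.Quotient.mk 𝔞) := le_comap_map
    _ ≤ ((span {τ} ⊔ maximalIdeal R ^ 2).map (Ideal.Quotient.mk 𝔞)).comap
          (Ideal.Quotient.mk 𝔞) := by
        refine comap_mono ?_
        rwa [Ideal.map_sup, map_span, Set.image_singleton, Ideal.map_pow, h𝔪]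
    _ = span {τ} ⊔ maximalIdeal R ^ 2 := by
        rw [comap_map_of_surjective' _ Ideal.Quotient.mk_surjective, mk_ker,
          sup_eq_left.2 (h𝔞.trans le_sup_right)]

end IsLocalRing

section Trim

variable {R : Type*} [CommRing R] {n : ℕ}

theorem span_range_fin_succ_eq_sup (I : Ideal R) (g : Fin (n + 1) → R) :
    span (Set.range g) =
      I * span {g 0} ⊔ span (Set.range fun i : Fin n => g i.succ) ⊔ span {g 0} := by
  rw [Fin.range_fin_succ, span_insert, sup_right_comm,
    sup_eq_right.2 (mul_le_right : I * span {g 0} ≤ _)]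
  rfl

theorem apply_zero_notMem_mul_span_sup {𝔫 : Ideal R} (h𝔫 : (1 : R) ∉ 𝔫) {g : Fin (n + 1) → R}
    (hg : ∀ c : Fin (n + 1) → R, ∑ i, c i * g i = 0 → c 0 ∈ 𝔫) :
    g 0 ∉ 𝔫 * span {g 0} ⊔ span (Set.range fun i : Fin n => g i.succ) := by
  intro h
  obtain ⟨_, hy, _, hz, hyz⟩ := Submodule.mem_sup.1 h
  obtain ⟨a, ha, rfl⟩ := mem_mul_span_singleton.1 hy
  obtain ⟨d, rfl⟩ := mem_span_range_iff_exists_fun.1 hz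
  have h1a : 1 - a ∈ 𝔫 := hg (Fin.cons (1 - a) (-d)) <| by
    simp only [Fin.sum_univ_succ, Fin.cons_zero, Fin.cons_succ, Pi.neg_apply, neg_mul,
      Finset.sum_neg_distrib]
    linear_combination -hyz
  exact h𝔫 (by simpa using add_mem h1a ha)

end Trim

/-- Let `(Q, 𝔫)` be a regular local ring of Krull dimension `3` and `𝔤 ⊆ 𝔫²` an
`𝔫`-primary ideal minimally generated by `g 0, …, g 2m` such that `Q ⧸ 𝔤` has
one-dimensional socle (i.e. `Q ⧸ 𝔤` is artinian Gorenstein).  Then the trimmed ideal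
`𝔞 = 𝔫·g 0 + (g 1, …, g 2m)` is `𝔫`-primary and `Q ⧸ 𝔞` has type `2`: its socle has a
`k`-basis of two elements; in particular `Q ⧸ 𝔞` is not Gorenstein (its socle is not
spanned by a single element). -/
theorem trimmed_gorenstein_type_two {Q : Type*} [CommRing Q] [IsLocalRing Q]
    (hreg : IsRegularLocal Q) (hdim : ringKrullDim Q = 3)
    (𝔫 : Ideal Q) (h𝔫 : 𝔫 = IsLocalRing.maximalIdeal Q)
    (m : ℕ) (𝔤 : Ideal Q) (h𝔤𝔫 : 𝔤 ≤ 𝔫 ^ 2) (h𝔤prim : 𝔤.radical = 𝔫)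
    (g : Fin (2 * m + 1) → Q)
    (hgen : Ideal.span (Set.range g) = 𝔤)
    (hmin : ∀ c : Fin (2 * m + 1) → Q, (∑ i, c i * g i) ∈ 𝔫 * 𝔤 → ∀ i, c i ∈ 𝔫)
    (hGor : ∃ w : Q ⧸ 𝔤, w ≠ 0 ∧ quotSocle 𝔫 𝔤 = Ideal.span {w})
    (𝔞 : Ideal Q)
    (h𝔞 : 𝔞 = 𝔫 * Ideal.span {g 0} ⊔
      Ideal.span (Set.range fun i : Fin (2 * m) => g i.succ)) :
    𝔞.radical = 𝔫 ∧
      (∃ v : Fin 2 → Q,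
        quotSocle 𝔫 𝔞 = Ideal.span (Set.range fun i => Ideal.Quotient.mk 𝔞 (v i)) ∧
          ∀ c : Fin 2 → Q, (∑ i, c i * v i) ∈ 𝔞 → ∀ i, c i ∈ 𝔫) ∧
      ¬ ∃ w : Q ⧸ 𝔞, quotSocle 𝔫 𝔞 = Ideal.span {w} := by
  have : IsNoetherianRing Q := hreg.1
  subst h𝔫
  obtain ⟨w, hw0, hw⟩ := hGor
  obtain ⟨w, rfl⟩ := Ideal.Quotient.mk_surjective w
  have h𝔤 : 𝔤 = 𝔞 ⊔ span {g 0} := by rw [← hgen, h𝔞]; exact span_range_fin_succ_eq_sup _ g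
  have hg0 : g 0 ∉ 𝔞 := h𝔞 ▸
    apply_zero_notMem_mul_span_sup (one_notMem _) fun c hc => hmin c (hc ▸ zero_mem _) 0
  have h𝔪𝔤 : maximalIdeal Q * 𝔤 ≤ 𝔞 := by
    rw [h𝔤, Ideal.mul_sup]
    exact sup_le mul_le_right (h𝔞 ▸ le_sup_left)
  have h𝔤_soc : 𝔤 ≤ 𝔞.colon (maximalIdeal Q) := fun x hx => Submodule.mem_colon.2 fun n hn =>
    h𝔪𝔤 (by rw [smul_eq_mul, mul_comm x n]; exact mul_mem_mul hn hx)
  have hrad := radical_eq_of_mul_le_of_le h𝔤prim h𝔪𝔤 (h𝔤 ▸ le_sup_left)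
  have h𝔤_colon := colon_eq_sup_of_quotSocle_eq hw
  rcases (wcovBy_sup_span_singleton (h𝔤_colon ▸ mem_sup_right (mem_span_singleton_self w))).eq_or_eq
    h𝔤_soc (h𝔤_colon ▸ Submodule.colon_mono (h𝔤 ▸ le_sup_left) le_rfl) with hcolon | hcolon
  · have := ringKrullDim_le_one_of_colon_eq ((h𝔤 ▸ le_sup_left).trans h𝔤𝔫) hrad (hcolon.trans h𝔤)
      (h𝔤 ▸ h𝔤_colon)
    rw [hdim] at this
    exact absurd this (by decide)
  · have hv := forall_mem_maximalIdeal_of_sum_mem hg0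
      (h𝔤 ▸ fun hw𝔤 => hw0 (Ideal.Quotient.eq_zero_iff_mem.2 hw𝔤))
      (hcolon ▸ mem_sup_right (mem_span_singleton_self w))
    have hsoc := quotSocle_eq_span_range (v := ![g 0, w])
      (by rw [hcolon, h𝔤, sup_assoc, ← span_insert, Matrix.range_cons_cons_empty])
    exact ⟨hrad, ⟨_, hsoc, hv⟩, not_exists_quotSocle_eq_span_singleton (one_notMem _) hv hsoc⟩
end
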